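/- Let k ≥ 1 and let I, J ∈ [n]^{2k−1} be distinct-element sequences whose decomposition into minimal equal sub-pairs uses at most k sets. Then the determinant of the (2k−1) × (2k−1) matrix V_{I,J}(X) with rows (1, X_{I_s}, …, X_{I_s}^{k−1}, X_{J_s}, …, X_{J_s}^{k−1}) for s = 1,…,2k−1 is a nonzero polynomial in ℤ[X₁,…,X_n]; moreover, its expansion as a sum over the (2k−1)! permutations contains a monomial obtained from exactly one permutation, hence with coefficient ±1. -/

import Mathlib

open MvPolynomial

/-- `(I_A, J_A)` is a minimal equal sub-pair of `(I, J)`. -/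
def MinimalEqualSubPair {n s : ℕ} (I J : Fin s → Fin n) (A : Finset (Fin s)) : Prop :=
  A.Nonempty ∧ A.image I = A.image J ∧
    ∀ A' ⊂ A, A'.Nonempty → A'.image I ≠ A'.image J

/-- `(I_B, J_B)` is free of equalities. -/
def FreeOfEqualities {n s : ℕ} (I J : Fin s → Fin n) (B : Finset (Fin s)) : Prop :=
  ∀ A ⊆ B, A.Nonempty → A.image I ≠ A.image J

/-- The `(2k-1) × (2k-1)` matrix `V_{I,J}` with `s`-th row
`(1, x_{I_s}, …, x_{I_s}^{k-1}, x_{J_s}, …, x_{J_s}^{k-1})`. -/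
def Vmat {R : Type*} [CommRing R] (k n : ℕ) (x : Fin n → R)
    (I J : Fin (2 * k - 1) → Fin n) :
    Matrix (Fin (2 * k - 1)) (Fin (2 * k - 1)) R :=
  Matrix.of fun s c =>
    if (c : ℕ) = 0 then 1
    else if (c : ℕ) < k then x (I s) ^ (c : ℕ)
    else x (J s) ^ ((c : ℕ) - k + 1)

/-!
Expanding `det V_{I,J}(X)` over permutations, the term in which row `s` sits in column `ρ s` is
a monomial in which `X_{I_s}` has exponent `iDeg (ρ s) + jDeg (ρ p)`, where `p` is the
predecessor of `s`, the row with `J_p = I_s` (if any). The minimal equal sub-pairs are the cycles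
of this relation.

Choose `ρ` as follows. In every cycle with at least two rows take an edge `p → s` and put `s`
and `p` into the I- and the J-column of one degree, filling the top degrees. Deleting one row
from every cycle leaves rows free of equalities, i.e. an acyclic predecessor relation, and as
there are at most `k` cycles, a predecessor-closed set of such rows fills the other I-columns.

The monomial of this `ρ` determines `ρ`. Going down from the top degree `e`, the variable
shared by the edge at degree `e` has exponent `2e`, while neither of its rows can have degree
above `e`, so both are recovered. The I-rows not yet recovered would then form an equal
sub-pair, so all I-rows are recovered; each J-row is then read off from its own variable, and
the last row is the one in the constant column. So the monomial comes from a single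
permutation and has coefficient `±1`.
-/

open Finset Function Equiv

theorem Equiv.apply_eq_of_forall_apply_eq {α β : Type*} {ρ π : α ≃ β} {P : β → Prop}
    (h : ∀ r, P (ρ r) → π r = ρ r) {u : α} (hu : P (π u)) : π u = ρ u := by
  have hr := h (ρ.symm (π u)) (by simpa using hu)
  rw [Equiv.apply_symm_apply] at hr
  simpa using congrArg ρ (π.injective hr)

lemma exists_perm_apply_eq_getElem {m : ℕ} (R : List (Fin m)) (hlen : R.length = m)
    (hR : ∀ x, x ∈ R) : ∃ τ : Perm (Fin m), ∀ c : Fin m, τ c = R[(c : ℕ)]'(hlen.symm ▸ c.2) := by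
  have hsurj : Surjective fun c : Fin m => R[(c : ℕ)]'(hlen.symm ▸ c.2) := fun x => by
    obtain ⟨i, hi, rfl⟩ := List.getElem_of_mem (hR x)
    exact ⟨⟨i, hlen ▸ hi⟩, rfl⟩
  exact ⟨Equiv.ofBijective _ ⟨Finite.injective_iff_surjective.2 hsurj, hsurj⟩, fun c => rfl⟩

lemma nodup_map_append_map_toList {α : Type*} {𝒜 : Finset (Finset α)}
    (hdisj : (𝒜 : Set (Finset α)).PairwiseDisjoint id) {f g : Finset α → α}
    (hf : ∀ A ∈ 𝒜, f A ∈ A) (hg : ∀ A ∈ 𝒜, g A ∈ A) (hfg : ∀ A ∈ 𝒜, f A ≠ g A) :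
    (𝒜.toList.map f ++ 𝒜.toList.map g).Nodup := by
  refine List.nodup_append.2 ⟨(nodup_toList 𝒜).map_on fun A hA B hB h => ?_,
    (nodup_toList 𝒜).map_on fun A hA B hB h => ?_, fun x hx y hy hxy => ?_⟩
  · rw [mem_toList] at hA hB
    exact hdisj.elim_finset hA hB _ (hf A hA) (h ▸ hf B hB)
  · rw [mem_toList] at hA hB
    exact hdisj.elim_finset hA hB _ (hg A hA) (h ▸ hg B hB)
  · obtain ⟨A, hA, rfl⟩ := List.mem_map.1 hx
    obtain ⟨B, hB, rfl⟩ := List.mem_map.1 hy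
    rw [mem_toList] at hA hB
    obtain rfl := hdisj.elim_finset hA hB _ (hf A hA) (hxy ▸ hg B hB)
    exact hfg A hA hxy

theorem coeff_det_monomial_eq_sign {ι σ R : Type*} [Fintype ι] [DecidableEq ι] [CommRing R]
    (e : ι → ι → σ →₀ ℕ) (τ : Perm ι)
    (hτ : ∀ π : Perm ι, ∑ j, e (π j) j = ∑ j, e (τ j) j → π = τ) :
    (Matrix.of fun i j => monomial (e i j) (1 : R)).det.coeff (∑ j, e (τ j) j) =
      (Perm.sign τ : ℤ) := by
  classical
  rw [Matrix.det_apply, coeff_sum, Finset.sum_eq_single τ]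
  · simp [← monomial_sum_one, Units.smul_def, smul_monomial, coeff_monomial]
  · intro π _ hπ
    simp [← monomial_sum_one, Units.smul_def, smul_monomial, coeff_monomial, mt (hτ π) hπ]
  · simp

section EqualSubPairs

variable {m n : ℕ} {I J : Fin m → Fin n}

lemma exists_pred_of_image_eq {D : Finset (Fin m)} (h : D.image I = D.image J) {s : Fin m}
    (hs : s ∈ D) : ∃ p ∈ D, J p = I s :=
  mem_image.1 (h ▸ mem_image_of_mem I hs)

lemma image_eq_image_of_forall_exists_pred (hI : Injective I) (hJ : Injective J)
    {D : Finset (Fin m)} (h : ∀ s ∈ D, ∃ p ∈ D, J p = I s) : D.image I = D.image J := by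
  refine eq_of_subset_of_card_le (fun v hv => ?_) ?_
  · obtain ⟨s, hs, rfl⟩ := mem_image.mp hv
    obtain ⟨p, hp, hps⟩ := h s hs
    exact mem_image.mpr ⟨p, hp, hps⟩
  · rw [card_image_of_injective _ hI, card_image_of_injective _ hJ]

lemma image_inter_eq_image_inter (hI : Injective I) (hJ : Injective J) {A B : Finset (Fin m)}
    (hA : A.image I = A.image J) (hB : B.image I = B.image J) :
    (A ∩ B).image I = (A ∩ B).image J := by
  refine image_eq_image_of_forall_exists_pred hI hJ fun s hs => ?_
  obtain ⟨p, hp, hps⟩ := exists_pred_of_image_eq hA (mem_inter.1 hs).1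
  obtain ⟨q, hq, hqs⟩ := exists_pred_of_image_eq hB (mem_inter.1 hs).2
  obtain rfl : p = q := hJ (hps.trans hqs.symm)
  exact ⟨p, mem_inter.2 ⟨hp, hq⟩, hps⟩

lemma MinimalEqualSubPair.subset_of_inter_nonempty (hI : Injective I) (hJ : Injective J)
    {A D : Finset (Fin m)} (hA : MinimalEqualSubPair I J A) (hD : D.image I = D.image J)
    (hDA : (D ∩ A).Nonempty) : A ⊆ D := by
  by_contra h
  refine hA.2.2 _ (ssubset_of_subset_of_ne inter_subset_right fun he => h ?_) hDA
    (image_inter_eq_image_inter hI hJ hD hA.2.1)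
  rw [← he]
  exact inter_subset_left

lemma MinimalEqualSubPair.exists_succ {A : Finset (Fin m)} (hA : MinimalEqualSubPair I J A)
    {c : Fin m} (hc : c ∈ A) : ∃ u ∈ A, I u = J c ∧ (1 < A.card → u ≠ c) := by
  obtain ⟨u, hu, huc⟩ := mem_image.1 (hA.2.1.symm ▸ mem_image_of_mem J hc)
  refine ⟨u, hu, huc, fun hcard hue => ?_⟩
  subst hue
  refine hA.2.2 {u} (ssubset_of_subset_of_ne (singleton_subset_iff.2 hu) fun h => ?_)
    (singleton_nonempty u) (by simp [huc])
  simp [← h] at hcard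

lemma FreeOfEqualities.mono {B B' : Finset (Fin m)} (h : FreeOfEqualities I J B)
    (hB : B' ⊆ B) : FreeOfEqualities I J B' :=
  fun A hA => h A (hA.trans hB)

lemma FreeOfEqualities.union (hJ : Injective J) {P Q : Finset (Fin m)}
    (hP : FreeOfEqualities I J P) (hQ : ∀ s ∈ Q, ∃ p ∉ P ∪ Q, J p = I s) :
    FreeOfEqualities I J (P ∪ Q) := by
  intro D hD hne hDeq
  refine hP D (fun s hs => ?_) hne hDeq
  by_contra hsP
  obtain ⟨p, hp, hps⟩ := hQ s ((mem_union.1 (hD hs)).resolve_left hsP)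
  obtain ⟨p', hp', hp's⟩ := exists_pred_of_image_eq hDeq hs
  exact hp (hJ (hp's.trans hps.symm) ▸ hD hp')

/-- `R` contains no cycle, so some row of `R \ P` has no predecessor in `R \ P` and can be added
to `P`. -/
lemma FreeOfEqualities.exists_subset_card_eq (hI : Injective I) (hJ : Injective J)
    {R : Finset (Fin m)} (hR : FreeOfEqualities I J R) {x : ℕ} (hx : x ≤ R.card) :
    ∃ P ⊆ R, P.card = x ∧ ∀ s ∈ P, ∀ p ∈ R, J p = I s → p ∈ P := by
  induction x with
  | zero => exact ⟨∅, empty_subset _, rfl, by simp⟩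
  | succ x ih =>
    obtain ⟨P, hPR, hPx, hP⟩ := ih (by omega)
    obtain ⟨s, hs, hsP⟩ : ∃ s ∈ R \ P, ∀ p ∈ R \ P, J p ≠ I s := by
      by_contra! h
      refine hR (R \ P) sdiff_subset (card_pos.1 ?_)
        (image_eq_image_of_forall_exists_pred hI hJ h)
      rw [card_sdiff_of_subset hPR]
      omega
    obtain ⟨hsR, hsP'⟩ := mem_sdiff.1 hs
    refine ⟨insert s P, insert_subset hsR hPR, by rw [card_insert_of_notMem hsP', hPx], ?_⟩
    intro s' hs' p hp hps
    rcases mem_insert.1 hs' with rfl | hs'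
    · by_contra hpP
      exact hsP p (mem_sdiff.2 ⟨hp, fun h => hpP (mem_insert_of_mem h)⟩) hps
    · exact mem_insert_of_mem (hP s' hs' p hp hps)

lemma freeOfEqualities_sdiff_image (hI : Injective I) (hJ : Injective J)
    {𝒜 : Finset (Finset (Fin m))} (hmesp : ∀ A ∈ 𝒜, MinimalEqualSubPair I J A)
    (hfree : FreeOfEqualities I J (univ \ 𝒜.sup id)) {ch : Finset (Fin m) → Fin m}
    (hch : ∀ A ∈ 𝒜, ch A ∈ A) : FreeOfEqualities I J (univ \ 𝒜.image ch) := by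
  intro D hD hne hDeq
  by_cases hmeet : ∃ A ∈ 𝒜, (D ∩ A).Nonempty
  · obtain ⟨A, hA, hDA⟩ := hmeet
    have := hD ((hmesp A hA).subset_of_inter_nonempty hI hJ hDeq hDA (hch A hA))
    exact (mem_sdiff.1 this).2 (mem_image_of_mem ch hA)
  · refine hfree D (fun s hs => mem_sdiff.2 ⟨mem_univ s, fun hs' => ?_⟩) hne hDeq
    obtain ⟨A, hA, hsA⟩ := mem_sup.1 hs'
    exact hmeet ⟨A, hA, s, mem_inter.2 ⟨hs, hsA⟩⟩

end EqualSubPairs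

namespace Vmat

/-- In row `s`, column `c` of `V_{I,J}(X)` holds `X_{I_s} ^ iDeg k c * X_{J_s} ^ jDeg k c`. -/
def iDeg (k c : ℕ) : ℕ := if c < k then c else 0

def jDeg (k c : ℕ) : ℕ := if k ≤ c then c - k + 1 else 0

lemma iDeg_lt {k : ℕ} (hk : 0 < k) (c : ℕ) : iDeg k c < k := by
  unfold iDeg; split_ifs <;> omega

lemma jDeg_lt {k c : ℕ} (hc : c < 2 * k - 1) : jDeg k c < k := by
  unfold jDeg; split_ifs <;> omega

lemma eq_of_iDeg_eq {k a b : ℕ} (h : iDeg k a = iDeg k b) (hb : 0 < iDeg k b) : a = b := by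
  unfold iDeg at *; split_ifs at * <;> omega

lemma eq_of_jDeg_eq {k a b : ℕ} (h : jDeg k a = jDeg k b) (hb : 0 < jDeg k b) : a = b := by
  unfold jDeg at *; split_ifs at * <;> omega

lemma eq_zero_of_iDeg_eq_zero {k c : ℕ} (hi : iDeg k c = 0) (hj : jDeg k c = 0) : c = 0 := by
  unfold iDeg jDeg at *; split_ifs at * <;> omega

noncomputable def entryExp (k : ℕ) {m n : ℕ} (I J : Fin m → Fin n) (s : Fin m) (c : ℕ) :
    Fin n →₀ ℕ :=
  Finsupp.single (I s) (iDeg k c) + Finsupp.single (J s) (jDeg k c)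

lemma X_eq_monomial_entryExp {R : Type*} [CommRing R] {k n : ℕ} (I J : Fin (2 * k - 1) → Fin n) :
    Vmat k n (fun i => (X i : MvPolynomial (Fin n) R)) I J =
      Matrix.of fun s (c : Fin (2 * k - 1)) => monomial (entryExp k I J s c) 1 := by
  ext s c : 1
  have hc := c.isLt
  simp only [Vmat, Matrix.of_apply, entryExp, iDeg, jDeg]
  split_ifs <;> first | omega | simp_all [X_pow_eq_monomial]

section Exponents

variable {k m n : ℕ} {I J : Fin m → Fin n}

lemma sum_entryExp_perm (π : Perm (Fin m)) :
    ∑ c, entryExp k I J (π c) c = ∑ s, entryExp k I J s (π.symm s) := by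
  simpa using Equiv.sum_comp π fun s => entryExp k I J s (π.symm s)

lemma sum_entryExp_apply (f : Fin m → ℕ) (v : Fin n) :
    (∑ s, entryExp k I J s (f s)) v =
      (∑ s, if I s = v then iDeg k (f s) else 0) + ∑ s, if J s = v then jDeg k (f s) else 0 := by
  simp [entryExp, Finsupp.single_apply, Finset.sum_add_distrib]

lemma sum_entryExp_apply_left (hI : Injective I) (f : Fin m → ℕ) (u : Fin m) :
    (∑ s, entryExp k I J s (f s)) (I u) =
      iDeg k (f u) + ∑ s, if J s = I u then jDeg k (f s) else 0 := by
  simp [sum_entryExp_apply, hI.eq_iff]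

lemma sum_entryExp_apply_right (hJ : Injective J) (f : Fin m → ℕ) (t : Fin m) :
    (∑ s, entryExp k I J s (f s)) (J t) =
      (∑ s, if I s = J t then iDeg k (f s) else 0) + jDeg k (f t) := by
  simp [sum_entryExp_apply, hJ.eq_iff]

end Exponents

/-- Row `s` sits in column `ρ s`; the top `b` degrees hold edges `t → u` (`J t = I u`). -/
structure IsPeelable (k b : ℕ) {n : ℕ} (I J : Fin (2 * k - 1) → Fin n)
    (ρ : Perm (Fin (2 * k - 1))) : Prop where
  lt : b < k
  top : ∀ u t, k - b ≤ iDeg k (ρ u) → jDeg k (ρ t) = iDeg k (ρ u) → J t = I u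
  pred : ∀ s p, 0 < iDeg k (ρ s) → J p = I s → 0 < iDeg k (ρ p) ∨ k - b ≤ jDeg k (ρ p)
  free : FreeOfEqualities I J (univ.filter fun s => 0 < iDeg k (ρ s))

section Recovery

variable {k n b : ℕ} {I J : Fin (2 * k - 1) → Fin n} {ρ π : Perm (Fin (2 * k - 1))}

lemma iDeg_le_of_forall {e : ℕ} (h : ∀ r, e < iDeg k (ρ r) → π r = ρ r) {u : Fin (2 * k - 1)}
    (hu : iDeg k (ρ u) ≤ e) : iDeg k (π u) ≤ e := by
  by_contra hlt
  rw [Equiv.apply_eq_of_forall_apply_eq (P := fun c : Fin _ => e < iDeg k c) h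
    (not_le.mp hlt)] at hlt
  omega

lemma jDeg_le_of_forall {e : ℕ} (h : ∀ r, e < jDeg k (ρ r) → π r = ρ r) {u : Fin (2 * k - 1)}
    (hu : jDeg k (ρ u) ≤ e) : jDeg k (π u) ≤ e := by
  by_contra hlt
  rw [Equiv.apply_eq_of_forall_apply_eq (P := fun c : Fin _ => e < jDeg k c) h
    (not_le.mp hlt)] at hlt
  omega

lemma iDeg_eq_of_forall_pred (hI : Injective I)
    (hsum : ∑ s, entryExp k I J s (π s) = ∑ s, entryExp k I J s (ρ s)) {s : Fin (2 * k - 1)}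
    (hs : ∀ p, J p = I s → jDeg k (π p) = jDeg k (ρ p)) : iDeg k (π s) = iDeg k (ρ s) := by
  have h := DFunLike.congr_fun hsum (I s)
  have hpred : (∑ p, if J p = I s then jDeg k (π p) else 0) =
      ∑ p, if J p = I s then jDeg k (ρ p) else 0 :=
    sum_congr rfl fun p _ => by split_ifs with hp; exacts [hs p hp, rfl]
  rw [sum_entryExp_apply_left hI, sum_entryExp_apply_left hI, hpred] at h
  omega

lemma jDeg_eq_of_forall_partner (hJ : Injective J)
    (hsum : ∑ s, entryExp k I J s (π s) = ∑ s, entryExp k I J s (ρ s)) {t : Fin (2 * k - 1)}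
    (ht : ∀ a, I a = J t → iDeg k (π a) = iDeg k (ρ a)) : jDeg k (π t) = jDeg k (ρ t) := by
  have h := DFunLike.congr_fun hsum (J t)
  have hpartner : (∑ a, if I a = J t then iDeg k (π a) else 0) =
      ∑ a, if I a = J t then iDeg k (ρ a) else 0 :=
    sum_congr rfl fun a _ => by split_ifs with ha; exacts [ht a ha, rfl]
  rw [sum_entryExp_apply_right hJ, sum_entryExp_apply_right hJ, hpartner] at h
  omega

lemma iDeg_add_jDeg_eq (hI : Injective I) (hJ : Injective J)
    (hsum : ∑ s, entryExp k I J s (π s) = ∑ s, entryExp k I J s (ρ s))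
    {u t : Fin (2 * k - 1)} (hut : J t = I u) :
    iDeg k (π u) + jDeg k (π t) = iDeg k (ρ u) + jDeg k (ρ t) := by
  have h := DFunLike.congr_fun hsum (I u)
  rw [sum_entryExp_apply_left hI, sum_entryExp_apply_left hI] at h
  simpa only [← hut, hJ.eq_iff, sum_ite_eq', mem_univ, if_true] using h

lemma apply_eq_of_jDeg_pos (hJ : Injective J)
    (hsum : ∑ s, entryExp k I J s (π s) = ∑ s, entryExp k I J s (ρ s))
    (hIrows : ∀ r, 0 < iDeg k (ρ r) → π r = ρ r) (t : Fin (2 * k - 1))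
    (ht : 0 < jDeg k (ρ t)) : π t = ρ t := by
  refine Fin.ext (eq_of_jDeg_eq (jDeg_eq_of_forall_partner hJ hsum fun a _ => ?_) ht)
  by_cases ha : 0 < iDeg k (ρ a)
  · rw [hIrows a ha]
  · have := iDeg_le_of_forall (e := 0) hIrows (u := a) (by omega)
    omega

theorem IsPeelable.apply_eq_of_top (hρ : IsPeelable k b I J ρ) (hI : Injective I)
    (hJ : Injective J) (hsum : ∑ s, entryExp k I J s (π s) = ∑ s, entryExp k I J s (ρ s))
    (r : Fin (2 * k - 1)) (hr : k - b ≤ iDeg k (ρ r) ∨ k - b ≤ jDeg k (ρ r)) : π r = ρ r := by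
  have hb := hρ.lt
  suffices ∀ d ≤ b, ∀ r, k - d ≤ iDeg k (ρ r) ∨ k - d ≤ jDeg k (ρ r) → π r = ρ r from
    this b le_rfl r hr
  intro d
  induction d with
  | zero =>
    intro _ r hr
    have := iDeg_lt (k := k) (by omega) (ρ r)
    have := jDeg_lt (k := k) (ρ r).isLt
    omega
  | succ d ih =>
    intro hd
    have ih := ih (by omega)
    -- the I-row `u` and the J-row `t` of degree `k - 1 - d`
    set u := ρ.symm ⟨k - 1 - d, by omega⟩
    set t := ρ.symm ⟨2 * k - 2 - d, by omega⟩
    have hu : iDeg k (ρ u) = k - 1 - d := by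
      simp only [u, apply_symm_apply, iDeg]; split_ifs <;> omega
    have ht : jDeg k (ρ t) = k - 1 - d := by
      simp only [t, apply_symm_apply, jDeg]; split_ifs <;> omega
    have hut := iDeg_add_jDeg_eq hI hJ hsum (hρ.top u t (by omega) (by omega))
    have hule := iDeg_le_of_forall (fun r hr => ih r (Or.inl (by omega))) hu.le
    have htle := jDeg_le_of_forall (fun r hr => ih r (Or.inr (by omega))) ht.le
    intro r hr
    by_cases hr' : k - d ≤ iDeg k (ρ r) ∨ k - d ≤ jDeg k (ρ r)
    · exact ih r hr'
    rcases hr with hr | hr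
    · obtain rfl : r = u := ρ.injective (Fin.ext (eq_of_iDeg_eq (k := k) (by omega) (by omega)))
      exact Fin.ext (eq_of_iDeg_eq (k := k) (by omega) (by omega))
    · obtain rfl : r = t := ρ.injective (Fin.ext (eq_of_jDeg_eq (k := k) (by omega) (by omega)))
      exact Fin.ext (eq_of_jDeg_eq (k := k) (by omega) (by omega))

theorem IsPeelable.apply_eq_of_iDeg_pos (hρ : IsPeelable k b I J ρ) (hI : Injective I)
    (hJ : Injective J) (hsum : ∑ s, entryExp k I J s (π s) = ∑ s, entryExp k I J s (ρ s))
    (r : Fin (2 * k - 1)) (hr : 0 < iDeg k (ρ r)) : π r = ρ r := by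
  by_contra hne
  -- the I-rows not recovered would form an equal sub-pair
  set D := univ.filter fun r => 0 < iDeg k (ρ r) ∧ π r ≠ ρ r
  have hD : ∀ s, s ∈ D ↔ 0 < iDeg k (ρ s) ∧ π s ≠ ρ s := by simp [D]
  refine hρ.free D (fun s hs => by simpa using ((hD s).1 hs).1) ⟨r, (hD r).2 ⟨hr, hne⟩⟩
    (image_eq_image_of_forall_exists_pred hI hJ fun s hs => ?_)
  rw [hD] at hs
  by_contra! hno
  refine hs.2 (Fin.ext (eq_of_iDeg_eq (iDeg_eq_of_forall_pred hI hsum fun p hp => ?_) hs.1))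
  rcases hρ.pred s p hs.1 hp with hp' | hp'
  · by_contra hne'
    exact hno p ((hD p).2 ⟨hp', fun h => hne' (by rw [h])⟩) hp
  · rw [hρ.apply_eq_of_top hI hJ hsum p (Or.inr hp')]

theorem IsPeelable.eq_of_sum_entryExp_eq (hρ : IsPeelable k b I J ρ) (hI : Injective I)
    (hJ : Injective J) (hsum : ∑ s, entryExp k I J s (π s) = ∑ s, entryExp k I J s (ρ s)) :
    π = ρ := by
  have hIrows := hρ.apply_eq_of_iDeg_pos hI hJ hsum
  have hrows : ∀ r, 0 < iDeg k (ρ r) ∨ 0 < jDeg k (ρ r) → π r = ρ r := fun r hr =>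
    hr.elim (hIrows r) (apply_eq_of_jDeg_pos hJ hsum hIrows r)
  refine Equiv.ext fun r => ?_
  by_cases hπr : 0 < iDeg k (π r) ∨ 0 < jDeg k (π r)
  · exact Equiv.apply_eq_of_forall_apply_eq (P := fun c : Fin _ => 0 < iDeg k c ∨ 0 < jDeg k c)
      hrows hπr
  by_cases hρr : 0 < iDeg k (ρ r) ∨ 0 < jDeg k (ρ r)
  · exact hrows r hρr
  -- both send `r` to the constant column
  push Not at hπr hρr
  exact Fin.ext ((eq_zero_of_iDeg_eq_zero (k := k) (by omega) (by omega)).trans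
    (eq_zero_of_iDeg_eq_zero (k := k) (by omega) (by omega)).symm)

end Recovery

/-- Each `(t, u) ∈ T` is an edge `J t = I u` bound for a top degree; `P` fills the other
I-columns. -/
structure IsSkeleton (k : ℕ) {n : ℕ} (I J : Fin (2 * k - 1) → Fin n)
    (T : List (Fin (2 * k - 1) × Fin (2 * k - 1))) (P : Finset (Fin (2 * k - 1))) : Prop where
  edge : ∀ x ∈ T, J x.1 = I x.2
  nodup : (T.map Prod.snd ++ T.map Prod.fst).Nodup
  disjoint : ∀ s ∈ P, s ∉ T.map Prod.snd ++ T.map Prod.fst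
  card : P.card + T.length = k - 1
  pred : ∀ s ∈ P, ∀ p, J p = I s → p ∈ P ∨ p ∈ T.map Prod.snd ++ T.map Prod.fst
  free : FreeOfEqualities I J P

section Construction

variable {k n : ℕ} {I J : Fin (2 * k - 1) → Fin n}
  {T : List (Fin (2 * k - 1) × Fin (2 * k - 1))} {P : Finset (Fin (2 * k - 1))}

lemma IsSkeleton.exists_compl (hS : IsSkeleton k I J T P) (hk : 1 ≤ k) :
    ∃ z W, W.length = k - 1 - T.length ∧
      ∀ x, x ∈ z :: W ↔ x ∉ P ∧ x ∉ T.map Prod.snd ++ T.map Prod.fst := by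
  classical
  set C := univ \ (P ∪ (T.map Prod.snd ++ T.map Prod.fst).toFinset)
  have hC : C.card = k - T.length := by
    rw [card_univ_sdiff, card_union_of_disjoint, List.toFinset_card_of_nodup hS.nodup,
      List.length_append, List.length_map, List.length_map, Fintype.card_fin]
    · have := hS.card; omega
    · exact disjoint_left.2 fun s hs hs' => hS.disjoint s hs (List.mem_toFinset.1 hs')
  obtain ⟨z, W, hzW⟩ := List.exists_cons_of_length_pos (l := C.toList)
    (by rw [length_toList, hC]; have := hS.card; omega)
  refine ⟨z, W, ?_, fun x => ?_⟩
  · have := congrArg List.length hzW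
    rw [length_toList, hC, List.length_cons] at this
    omega
  · rw [← hzW, mem_toList]
    simp [C]

theorem IsSkeleton.exists_perm (hS : IsSkeleton k I J T P) (hk : 1 ≤ k) :
    ∃ τ : Perm (Fin (2 * k - 1)),
      (∀ c : Fin (2 * k - 1), 0 < iDeg k c → τ c ∈ P ∨ τ c ∈ T.map Prod.snd) ∧
      (∀ c : Fin (2 * k - 1), iDeg k c = 0 → jDeg k c < k - T.length →
        τ c ∉ P ∧ τ c ∉ T.map Prod.snd ++ T.map Prod.fst) ∧
      ∀ (c c' : Fin (2 * k - 1)) (j : ℕ) (hj : j < T.length), (c : ℕ) = k - T.length + j →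
        (c' : ℕ) = 2 * k - 1 - T.length + j → τ c = T[j].2 ∧ τ c' = T[j].1 := by
  obtain ⟨z, W, hW, hzW⟩ := hS.exists_compl hk
  have hP : P.card = k - 1 - T.length := by have := hS.card; omega
  have hb : T.length < k := by have := hS.card; omega
  -- the rows in column order: the constant column, the I-columns, then the J-columns
  set R := z :: (P.toList ++ T.map Prod.snd ++ W ++ T.map Prod.fst)
  have hlen : R.length = 2 * k - 1 := by
    simp only [R, List.length_cons, List.length_append, length_toList, List.length_map, hW, hP]
    have := hS.card
    omega
  have hR : ∀ x, x ∈ R := fun x => by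
    have := hzW x
    simp only [List.mem_cons, List.mem_append] at this
    simp only [R, List.mem_cons, List.mem_append, mem_toList]
    tauto
  obtain ⟨τ, hτ⟩ := exists_perm_apply_eq_getElem R hlen hR
  refine ⟨τ, fun c hc => ?_, fun c hi hj => ?_, fun c c' j hj hc hc' => ⟨?_, ?_⟩⟩
  · have : 0 < (c : ℕ) ∧ (c : ℕ) < k := by unfold iDeg at hc; split_ifs at hc <;> omega
    rw [hτ, List.getElem_cons, dif_neg (by omega), List.getElem_append_left (by simp [hP]; omega),
      List.getElem_append_left (by simp [hP]; omega)]
    simpa using List.getElem_mem (l := P.toList ++ T.map Prod.snd) _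
  · have : (c : ℕ) = 0 ∨ k ≤ (c : ℕ) ∧ (c : ℕ) < 2 * k - 1 - T.length := by
      unfold iDeg jDeg at *; split_ifs at hi hj <;> omega
    refine (hzW _).1 ?_
    rw [hτ, List.getElem_cons]
    split_ifs with hc0
    · exact List.mem_cons_self
    rw [List.getElem_append_left (by simp [hP, hW]; omega),
      List.getElem_append_right (by simp [hP]; omega)]
    exact List.mem_cons_of_mem _ (List.getElem_mem _)
  · rw [hτ, List.getElem_cons, dif_neg (by omega),
      List.getElem_append_left (by simp [hP, hW]; omega),
      List.getElem_append_left (by simp [hP]; omega),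
      List.getElem_append_right (by simp [hP]; omega), List.getElem_map]
    congr 2
    simp [hP]; omega
  · rw [hτ, List.getElem_cons, dif_neg (by omega),
      List.getElem_append_right (by simp [hP, hW]; omega), List.getElem_map]
    congr 2
    simp [hP, hW]; omega

theorem IsSkeleton.exists_isPeelable (hS : IsSkeleton k I J T P) (hk : 1 ≤ k)
    (hJ : Injective J) : ∃ ρ, IsPeelable k T.length I J ρ := by
  obtain ⟨τ, hIcol, hrest, htop⟩ := hS.exists_perm hk
  have hb : T.length < k := by have := hS.card; omega
  refine ⟨τ.symm, hb, fun u t hu ht => ?_, fun s p hs hps => ?_, ?_⟩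
  · obtain ⟨c, rfl⟩ := τ.surjective u
    obtain ⟨c', rfl⟩ := τ.surjective t
    simp only [symm_apply_apply] at hu ht
    have : k - T.length ≤ (c : ℕ) ∧ (c : ℕ) < k ∧ (c' : ℕ) = c + k - 1 := by
      unfold iDeg jDeg at *; split_ifs at hu ht <;> omega
    obtain ⟨hc, hc'⟩ := htop c c' (c - (k - T.length)) (by omega) (by omega) (by omega)
    rw [hc, hc']
    exact hS.edge _ (List.getElem_mem _)
  · obtain ⟨c, rfl⟩ := τ.surjective s
    obtain ⟨c', rfl⟩ := τ.surjective p
    simp only [symm_apply_apply] at hs ⊢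
    by_contra! h
    have hc' := hrest c' (by omega) h.2
    rcases hIcol c hs with hsP | hsT
    · exact (hS.pred _ hsP _ hps).elim hc'.1 hc'.2
    · obtain ⟨x, hx, hxc⟩ := List.mem_map.1 hsT
      rw [← hxc, ← hS.edge x hx] at hps
      exact hc'.2 (List.mem_append_right _ (hJ hps ▸ List.mem_map_of_mem hx))
  · classical
    refine (hS.free.union hJ (Q := (T.map Prod.snd).toFinset) fun s hs => ?_).mono
      fun s hs => ?_
    · obtain ⟨x, hx, rfl⟩ := List.mem_map.1 (List.mem_toFinset.1 hs)
      have hx1 : x.1 ∈ T.map Prod.fst := List.mem_map_of_mem hx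
      refine ⟨x.1, fun h => ?_, hS.edge x hx⟩
      rcases mem_union.1 h with h | h
      · exact hS.disjoint _ h (List.mem_append_right _ hx1)
      · exact (List.nodup_append.1 hS.nodup).2.2 _ (List.mem_toFinset.1 h) _ hx1 rfl
    · have := hIcol (τ.symm s) (mem_filter.1 hs).2
      simp only [apply_symm_apply] at this
      simpa [mem_union, List.mem_toFinset] using this

theorem exists_isSkeleton (hk : 1 ≤ k) (hI : Injective I) (hJ : Injective J)
    (𝒜 : Finset (Finset (Fin (2 * k - 1)))) (hmesp : ∀ A ∈ 𝒜, MinimalEqualSubPair I J A)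
    (hdisj : (𝒜 : Set (Finset (Fin (2 * k - 1)))).PairwiseDisjoint id)
    (hfree : FreeOfEqualities I J (univ \ 𝒜.sup id)) (hcard : 𝒜.card ≤ k) :
    ∃ T P, IsSkeleton k I J T P := by
  classical
  have : Nonempty (Fin (2 * k - 1)) := ⟨⟨0, by omega⟩⟩
  -- in each `A ∈ 𝒜` pick a row `ch A` and its successor `nxt A`
  have hpair : ∀ A ∈ 𝒜, ∃ c ∈ A, ∃ u ∈ A, I u = J c ∧ (1 < A.card → u ≠ c) := fun A hA =>
    let ⟨c, hc⟩ := (hmesp A hA).1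
    ⟨c, hc, (hmesp A hA).exists_succ hc⟩
  choose! ch hch nxt hnxt hedge hne using hpair
  set big := 𝒜.filter fun A => 1 < A.card
  set T := big.toList.map fun A => (ch A, nxt A)
  set Rest := univ \ (big.image nxt ∪ 𝒜.image ch)
  have hRest : FreeOfEqualities I J Rest :=
    (freeOfEqualities_sdiff_image hI hJ hmesp hfree hch).mono
      (sdiff_subset_sdiff subset_rfl subset_union_right)
  have hrows : T.map Prod.snd ++ T.map Prod.fst = big.toList.map nxt ++ big.toList.map ch := by
    simp [T, comp_def]
  have hmemT : ∀ x, x ∈ T.map Prod.snd ++ T.map Prod.fst ↔ ∃ A ∈ big, nxt A = x ∨ ch A = x :=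
    fun x => by
    simp only [hrows, List.mem_append, List.mem_map, mem_toList, ← exists_or, ← and_or_left]
  have hnd : (T.map Prod.snd ++ T.map Prod.fst).Nodup := hrows ▸
    nodup_map_append_map_toList (hdisj.subset (coe_subset.2 (filter_subset _ _)))
      (fun A hA => hnxt A (mem_filter.1 hA).1) (fun A hA => hch A (mem_filter.1 hA).1)
      fun A hA => hne A (mem_filter.1 hA).1 (mem_filter.1 hA).2
  have hTk : 2 * T.length ≤ 2 * k - 1 := by simpa [two_mul] using hnd.length_le_card
  have hRcard : k - 1 - T.length ≤ Rest.card := by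
    have h1 := card_union_le (big.image nxt) (𝒜.image ch)
    have h2 := card_image_le (s := big) (f := nxt)
    have h3 := card_image_le (s := 𝒜) (f := ch)
    have h4 : T.length = big.card := by simp [T]
    rw [card_univ_sdiff, Fintype.card_fin]
    omega
  obtain ⟨P, hPR, hPcard, hPclosed⟩ := hRest.exists_subset_card_eq hI hJ hRcard
  refine ⟨T, P, ⟨fun x hx => ?_, hnd, fun s hs hsT => ?_, by omega, fun s hs p hps => ?_,
    hRest.mono hPR⟩⟩
  · obtain ⟨A, hA, rfl⟩ := List.mem_map.1 hx
    exact (hedge A (mem_filter.1 (mem_toList.1 hA)).1).symm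
  · obtain ⟨A, hA, hAs⟩ := (hmemT s).1 hsT
    have := mem_sdiff.1 (hPR hs)
    simp only [mem_union, mem_image, not_or, not_exists, not_and] at this
    rcases hAs with rfl | rfl
    · exact this.2.1 A hA rfl
    · exact this.2.2 A (mem_filter.1 hA).1 rfl
  · by_cases hp : p ∈ Rest
    · exact Or.inl (hPclosed s hs p hp hps)
    simp only [Rest, mem_sdiff, mem_univ, true_and, not_not, mem_union, mem_image] at hp
    rcases hp with ⟨A, hA, rfl⟩ | ⟨A, hA, rfl⟩
    · exact Or.inr ((hmemT _).2 ⟨A, hA, Or.inl rfl⟩)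
    by_cases hAc : 1 < A.card
    · exact Or.inr ((hmemT _).2 ⟨A, mem_filter.2 ⟨hA, hAc⟩, Or.inr rfl⟩)
    -- `A = {ch A}` is a loop: `I (ch A) = J (ch A) = I s`
    have hloop : nxt A = ch A := card_le_one.1 (not_lt.1 hAc) _ (hnxt A hA) _ (hch A hA)
    rw [← hedge A hA, hloop] at hps
    exact Or.inl (hI hps ▸ hs)

end Construction

end Vmat

/-- If the decomposition of `(I, J)` into minimal equal sub-pairs uses at most `k` sets,
then `det (V_{I,J}(X)) ≠ 0` in `ℤ[X₁,…,X_n]`, and its expansion contains a monomial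
with coefficient `±1`. -/
theorem stmt7 (n k : ℕ) (hk : 1 ≤ k) (I J : Fin (2 * k - 1) → Fin n)
    (hI : Function.Injective I) (hJ : Function.Injective J)
    (𝒜 : Finset (Finset (Fin (2 * k - 1))))
    (hmesp : ∀ A ∈ 𝒜, MinimalEqualSubPair I J A)
    (hdisj : (𝒜 : Set (Finset (Fin (2 * k - 1)))).Pairwise fun A B => Disjoint A B)
    (hfree : FreeOfEqualities I J (Finset.univ \ 𝒜.sup id))
    (hcard : 𝒜.card ≤ k) :
    (Vmat k n (fun i => (X i : MvPolynomial (Fin n) ℤ)) I J).det ≠ 0 ∧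
    ∃ d : Fin n →₀ ℕ,
      (Vmat k n (fun i => (X i : MvPolynomial (Fin n) ℤ)) I J).det.coeff d = 1 ∨
      (Vmat k n (fun i => (X i : MvPolynomial (Fin n) ℤ)) I J).det.coeff d = -1 := by
  obtain ⟨T, P, hS⟩ := Vmat.exists_isSkeleton hk hI hJ 𝒜 hmesp hdisj hfree hcard
  obtain ⟨ρ, hρ⟩ := hS.exists_isPeelable hk hJ
  have hcoeff : (Vmat k n (fun i => (X i : MvPolynomial (Fin n) ℤ)) I J).det.coeff
      (∑ c, Vmat.entryExp k I J (ρ.symm c) c) = Perm.sign ρ.symm := by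
    rw [Vmat.X_eq_monomial_entryExp]
    refine coeff_det_monomial_eq_sign _ ρ.symm fun π hπ => ?_
    rw [Vmat.sum_entryExp_perm, Vmat.sum_entryExp_perm, symm_symm] at hπ
    rw [← hρ.eq_of_sum_entryExp_eq hI hJ hπ, symm_symm]
  refine ⟨fun h => ?_, ∑ c, Vmat.entryExp k I J (ρ.symm c) c, ?_⟩
  · rw [h, coeff_zero] at hcoeff
    exact Units.ne_zero _ hcoeff.symm
  · rcases Int.units_eq_one_or (Perm.sign ρ.symm) with h | h <;> simp [hcoeff, h]
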